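/- For an invertible linear map g : ℝ⁴ → ℝ⁴, the following are equivalent: (i) g*α_L¹ = α_L¹ and g*α_L³ = α_L³; (ii) the ℝ-linear map T ∘ g ∘ T⁻¹ : ℂ² → ℂ² is ℂ-linear and has complex determinant equal to 1. In particular, the group G₀ = {g ∈ SL(4,ℝ) : g*α_L¹ = α_L¹, g*α_L³ = α_L³} is isomorphic to SL(2,ℂ) via conjugation by T. -/

import Mathlib

/-!
Work in `V = ℝ⁴` (as `Fin 4 → ℝ`) with standard basis `e i` and dual basis
`ω i`.  Alternating `k`-forms are `V [⋀^Fin k]→ₗ[ℝ] ℝ`; `wedgeF` is the wedge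
product (shuffle convention), `vol4 = ω¹∧ω²∧ω³∧ω⁴`, `pairF` is the pairing
`⟨·,·⟩` on `Λ²V*` determined by `α ∧ β = ⟨α,β⟩ ω¹∧ω²∧ω³∧ω⁴`, and `pullF g α`
is the pullback `(g*α)(u,v) = α (g u) (g v)`.
-/

noncomputable section

abbrev V4 : Type := Fin 4 → ℝ

/-- The wedge product of real-valued alternating forms. -/
noncomputable def wedgeF {M : Type} [AddCommGroup M] [Module ℝ M] {a b : ℕ}
    (f : M [⋀^Fin a]→ₗ[ℝ] ℝ) (g : M [⋀^Fin b]→ₗ[ℝ] ℝ) :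
    M [⋀^Fin (a + b)]→ₗ[ℝ] ℝ :=
  ((TensorProduct.lid ℝ ℝ).toLinearMap.compAlternatingMap
    (f.domCoprod g)).domDomCongr finSumFinEquiv

/-- The coordinate 1-forms `ωⁱ` (as alternating 1-forms). -/
noncomputable def dl {n : ℕ} (i : Fin n) : (Fin n → ℝ) [⋀^Fin 1]→ₗ[ℝ] ℝ :=
  AlternatingMap.ofSubsingleton ℝ (Fin n → ℝ) ℝ 0 (LinearMap.proj i)

/-- `ωⁱ ∧ ωʲ` as an alternating 2-form on `ℝ⁴`. -/
noncomputable def ww (i j : Fin 4) : V4 [⋀^Fin 2]→ₗ[ℝ] ℝ := wedgeF (dl i) (dl j)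

/-- The volume form `ω¹∧ω²∧ω³∧ω⁴` on `ℝ⁴`. -/
noncomputable def vol4 : V4 [⋀^Fin 4]→ₗ[ℝ] ℝ := wedgeF (ww 0 1) (ww 2 3)

/-- The standard basis vectors. -/
noncomputable def ev {n : ℕ} (i : Fin n) : Fin n → ℝ := Pi.single i 1

/-- The pairing `⟨α,β⟩` on `Λ²(ℝ⁴)*`, characterized by
`α ∧ β = ⟨α,β⟩ ω¹∧ω²∧ω³∧ω⁴` (defined here as the value of `α ∧ β` on the
standard basis, on which the volume form takes the value `1`). -/
noncomputable def pairF (α β : V4 [⋀^Fin 2]→ₗ[ℝ] ℝ) : ℝ :=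
  wedgeF α β ![ev 0, ev 1, ev 2, ev 3]

/-- Pullback of an alternating form along a linear map:
`(g*α)(v₁,…,v_k) = α (g v₁) … (g v_k)`. -/
noncomputable def pullF {k : ℕ} (g : V4 →ₗ[ℝ] V4) (α : V4 [⋀^Fin k]→ₗ[ℝ] ℝ) :
    V4 [⋀^Fin k]→ₗ[ℝ] ℝ := α.compLinearMap g

/-- `α_L¹ = ω¹∧ω² + ω³∧ω⁴`. -/
noncomputable def αL1 : V4 [⋀^Fin 2]→ₗ[ℝ] ℝ := ww 0 1 + ww 2 3

/-- `α_L³ = ω¹∧ω⁴ + ω²∧ω³`. -/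
noncomputable def αL3 : V4 [⋀^Fin 2]→ₗ[ℝ] ℝ := ww 0 3 + ww 1 2

/-- The ℝ-linear isomorphism `T : ℝ⁴ → ℂ²`,
`T(x¹,x²,x³,x⁴) = (x³ + i x¹, x² + i x⁴)`. -/
noncomputable def Tmap (x : Fin 4 → ℝ) : Fin 2 → ℂ :=
  ![(x 2 : ℂ) + (x 0 : ℂ) * Complex.I, (x 1 : ℂ) + (x 3 : ℂ) * Complex.I]

/-- The inverse of `T`. -/
noncomputable def Tinv (w : Fin 2 → ℂ) : Fin 4 → ℝ :=
  ![(w 0).im, (w 1).re, (w 0).re, (w 1).im]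

/-!
Under `T`, the form `-α_L³ + i α_L¹` becomes the complex determinant
`cdet z w = z₀ w₁ - z₁ w₀` on `ℂ²`, so (i) says exactly that `h = T ∘ g ∘ T⁻¹` preserves
`cdet`. A complex matrix multiplies `cdet` by its determinant, which gives (ii) ⇒ (i).
Conversely `cdet` is nondegenerate, so an ℝ-linear `h` preserving it is injective, hence
onto, and then `cdet (h (i z) - i h z) (h w) = 0` for all `w` forces `h (i z) = i h z`. Thus `h` is
ℂ-linear, given by a matrix `A`, and `det A = cdet (h e₀) (h e₁) = cdet e₀ e₁ = 1`.
-/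

open Equiv in
lemma wedgeF_apply_fin_two {M : Type} [AddCommGroup M] [Module ℝ M]
    (f g : M [⋀^Fin 1]→ₗ[ℝ] ℝ) (u v : M) :
    wedgeF f g ![u, v] = f ![u] * g ![v] - f ![v] * g ![u] := by
  -- Since `1! * 1! = 1`, `f.domCoprod g` is the alternatization of `f ⊗ g`, a sum over the
  -- two permutations of `Fin 1 ⊕ Fin 1`.
  have h := MultilinearMap.domCoprod_alternization_eq f g
  simp only [Fintype.card_unique, Nat.factorial_one, mul_one, one_smul] at h
  rw [wedgeF, AlternatingMap.domDomCongr_apply, LinearMap.compAlternatingMap_apply, ← h,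
    MultilinearMap.alternatization_def, sum_apply,
    show (Finset.univ : Finset (Perm (Fin 1 ⊕ Fin 1))) = {1, swap (.inl 0) (.inr 0)} by decide,
    Finset.sum_pair (by decide)]
  simp only [Perm.sign_one, one_smul, MultilinearMap.domDomCongr_apply, Perm.coe_one, id_eq,
    Function.comp_apply, MultilinearMap.domCoprod_apply, AlternatingMap.coe_multilinearMap,
    Perm.sign_swap', reduceCtorEq, ↓reduceIte, Units.neg_smul, _root_.neg_apply,
    LinearEquiv.coe_coe, map_add, TensorProduct.lid_tmul, smul_eq_mul, map_neg]
  rw [sub_eq_add_neg]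
  congr <;> funext i <;> fin_cases i <;> rfl

lemma dl_apply {n : ℕ} (i : Fin n) (u : Fin n → ℝ) : dl i ![u] = u i := by
  simp [dl]

lemma ww_apply (i j : Fin 4) (u v : V4) : ww i j ![u, v] = u i * v j - v i * u j := by
  rw [ww, wedgeF_apply_fin_two, dl_apply, dl_apply, dl_apply, dl_apply]

lemma pullF_eq_self_iff (g : V4 →ₗ[ℝ] V4) (α : V4 [⋀^Fin 2]→ₗ[ℝ] ℝ) :
    pullF g α = α ↔ ∀ u v, α ![g u, g v] = α ![u, v] := by
  have pullF_apply (u v : V4) : pullF g α ![u, v] = α ![g u, g v] := by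
    rw [pullF, AlternatingMap.compLinearMap_apply]
    congr; funext i; fin_cases i <;> rfl
  refine ⟨fun h u v => by rw [← pullF_apply, h], fun h => AlternatingMap.ext fun w => ?_⟩
  have hw : w = ![w 0, w 1] := by funext i; fin_cases i <;> rfl
  rw [hw, pullF_apply, h]

def cdet (z w : Fin 2 → ℂ) : ℂ := z 0 * w 1 - z 1 * w 0

lemma cdet_Tmap (u v : V4) :
    cdet (Tmap u) (Tmap v) = -αL3 ![u, v] + αL1 ![u, v] * Complex.I := by
  simp only [αL1, αL3, AlternatingMap.add_apply, ww_apply]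
  apply Complex.ext <;>
    simp only [cdet, Tmap, Matrix.cons_val_zero, Matrix.cons_val_one, Matrix.cons_val_fin_one,
      Complex.add_re, Complex.add_im, Complex.sub_re, Complex.sub_im, Complex.mul_re,
      Complex.mul_im, Complex.neg_re, Complex.neg_im, Complex.ofReal_re, Complex.ofReal_im,
      Complex.I_re, Complex.I_im] <;>
    ring

lemma pullF_αL1_αL3_iff (g : V4 →ₗ[ℝ] V4) :
    (pullF g αL1 = αL1 ∧ pullF g αL3 = αL3) ↔
      ∀ u v, cdet (Tmap (g u)) (Tmap (g v)) = cdet (Tmap u) (Tmap v) := by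
  rw [and_comm]
  simp [pullF_eq_self_iff, cdet_Tmap, Complex.ext_iff, forall_and]

def tLinearEquiv : V4 ≃ₗ[ℝ] (Fin 2 → ℂ) where
  toFun := Tmap
  invFun := Tinv
  map_add' x y := by
    funext i
    fin_cases i <;>
      simp only [Tmap, Pi.add_apply, Complex.ofReal_add, Fin.zero_eta, Fin.mk_one,
        Matrix.cons_val_zero, Matrix.cons_val_one, Matrix.cons_val_fin_one] <;>
      ring
  map_smul' c x := by
    funext i
    fin_cases i <;>
      simp only [Tmap, Pi.smul_apply, smul_eq_mul, Complex.ofReal_mul, Fin.zero_eta, Fin.mk_one,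
        Matrix.cons_val_zero, Matrix.cons_val_one, Matrix.cons_val_fin_one, RingHom.id_apply,
        Complex.real_smul] <;>
      ring
  left_inv x := by funext i; fin_cases i <;> simp [Tmap, Tinv]
  right_inv w := by funext i; fin_cases i <;> simp [Tmap, Tinv]

open scoped Matrix

lemma cdet_mulVec (A : Matrix (Fin 2) (Fin 2) ℂ) (z w : Fin 2 → ℂ) :
    cdet (A *ᵥ z) (A *ᵥ w) = A.det * cdet z w := by
  simp only [cdet, Matrix.mulVec, dotProduct, Fin.sum_univ_two, Matrix.det_fin_two]
  ring

lemma eq_zero_of_forall_cdet_eq_zero {z : Fin 2 → ℂ} (hz : ∀ w, cdet z w = 0) : z = 0 := by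
  have h0 := hz (Pi.single 0 1)
  have h1 := hz (Pi.single 1 1)
  simp only [cdet, Pi.single_eq_same, Pi.single_eq_of_ne one_ne_zero,
    Pi.single_eq_of_ne zero_ne_one, mul_zero, mul_one, zero_sub, sub_zero, neg_eq_zero] at h0 h1
  funext i; fin_cases i <;> simp [h0, h1]

def PreservesCdet (φ : (Fin 2 → ℂ) → Fin 2 → ℂ) : Prop :=
  ∀ z w, cdet (φ z) (φ w) = cdet z w

namespace PreservesCdet

variable {φ : (Fin 2 → ℂ) →ₗ[ℝ] (Fin 2 → ℂ)}

lemma injective (hφ : PreservesCdet φ) : Function.Injective φ := by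
  rw [← LinearMap.ker_eq_bot, LinearMap.ker_eq_bot']
  intro z hz
  exact eq_zero_of_forall_cdet_eq_zero fun w => by rw [← hφ, hz]; simp [cdet]

lemma map_I_smul (hφ : PreservesCdet φ) (z : Fin 2 → ℂ) :
    φ (Complex.I • z) = Complex.I • φ z := by
  have hsurj := LinearMap.injective_iff_surjective.mp hφ.injective
  rw [← sub_eq_zero]
  refine eq_zero_of_forall_cdet_eq_zero fun w => ?_
  obtain ⟨w, rfl⟩ := hsurj w
  have e1 := hφ (Complex.I • z) w
  have e2 := hφ z w
  simp only [cdet, Pi.sub_apply, Pi.smul_apply, smul_eq_mul] at e1 e2 ⊢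
  linear_combination e1 - Complex.I * e2

lemma map_smul (hφ : PreservesCdet φ) (c : ℂ) (z : Fin 2 → ℂ) : φ (c • z) = c • φ z := by
  have re_add_im_smul (y : Fin 2 → ℂ) : c • y = c.re • y + c.im • Complex.I • y := by
    rw [← Complex.coe_smul, ← Complex.coe_smul, ← smul_assoc, ← add_smul, smul_eq_mul,
      Complex.re_add_im]
  rw [re_add_im_smul, map_add, φ.map_smul, φ.map_smul, hφ.map_I_smul, ← re_add_im_smul]

lemma exists_mulVec (hφ : PreservesCdet φ) :
    ∃ A : Matrix (Fin 2) (Fin 2) ℂ, A.det = 1 ∧ ∀ v, φ v = A *ᵥ v := by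
  let φℂ : (Fin 2 → ℂ) →ₗ[ℂ] (Fin 2 → ℂ) :=
    { toFun := φ, map_add' := φ.map_add, map_smul' := hφ.map_smul }
  have hA (v : Fin 2 → ℂ) : φ v = LinearMap.toMatrix' φℂ *ᵥ v :=
    (φℂ.toMatrix'_mulVec v).symm
  refine ⟨LinearMap.toMatrix' φℂ, ?_, hA⟩
  have := cdet_mulVec (LinearMap.toMatrix' φℂ) (Pi.single 0 1) (Pi.single 1 1)
  rwa [← hA, ← hA, hφ, show cdet (Pi.single 0 1) (Pi.single 1 1) = 1 by simp [cdet], mul_one,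
    eq_comm] at this

end PreservesCdet

lemma preservesCdet_iff (φ : (Fin 2 → ℂ) →ₗ[ℝ] (Fin 2 → ℂ)) :
    PreservesCdet φ ↔ ∃ A : Matrix (Fin 2) (Fin 2) ℂ, A.det = 1 ∧ ∀ v, φ v = A *ᵥ v := by
  refine ⟨PreservesCdet.exists_mulVec, fun ⟨A, hdet, hA⟩ z w => ?_⟩
  rw [hA, hA, cdet_mulVec, hdet, one_mul]

theorem stmt_13_general (g : V4 →ₗ[ℝ] V4) :
    (pullF g αL1 = αL1 ∧ pullF g αL3 = αL3) ↔
    (∃ A : Matrix (Fin 2) (Fin 2) ℂ, A.det = 1 ∧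
      ∀ v : Fin 2 → ℂ, Tmap (g (Tinv v)) = A.mulVec v) := by
  rw [pullF_αL1_αL3_iff]
  refine Iff.trans ?_ (preservesCdet_iff (tLinearEquiv.conj g))
  rw [PreservesCdet, tLinearEquiv.surjective.forall₂]
  simp only [LinearEquiv.conj_apply_apply, LinearEquiv.symm_apply_apply]
  rfl

/-- for an invertible linear `g : ℝ⁴ → ℝ⁴`, the conditions
`g*α_L¹ = α_L¹` and `g*α_L³ = α_L³` hold iff `T ∘ g ∘ T⁻¹ : ℂ² → ℂ²` is
ℂ-linear with complex determinant 1 (i.e. it is given by a complex 2×2 matrix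
`A` with `det A = 1`); so `G₀` is isomorphic to `SL(2,ℂ)` via conjugation by
`T`. -/
theorem stmt_13 (g : V4 →ₗ[ℝ] V4) (hg : Function.Bijective g) :
    (pullF g αL1 = αL1 ∧ pullF g αL3 = αL3) ↔
    (∃ A : Matrix (Fin 2) (Fin 2) ℂ, A.det = 1 ∧
      ∀ v : Fin 2 → ℂ, Tmap (g (Tinv v)) = A.mulVec v) :=
  stmt_13_general g
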